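/- Let α be a flow on a C*-algebra A, β ∈ ℝ, and let A₀ ⊆ A be an α-invariant *-subalgebra consisting of α-entire elements with α_{−iβ/2}(A₀) = A₀. Let φ : A₀ → ℂ be an α-invariant and α_{−iβ/2}-invariant linear functional. Then the following are equivalent: (1) φ(a*a) = φ(α_{−iβ/2}(a) α_{−iβ/2}(a)*) for all a ∈ A₀; (2) φ(ab) = φ(b α_{iβ}(a)) for all a, b ∈ A₀. -/

import Mathlib

/-- Two entire functions into a complex Banach space that agree on the reals agree. -/
lemma entire_eq_of_real_eq {A : Type*} [NormedAddCommGroup A] [NormedSpace ℂ A]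
    [CompleteSpace A] {f g : ℂ → A} (hf : Differentiable ℂ f) (hg : Differentiable ℂ g)
    (h : ∀ t : ℝ, f t = g t) : ∀ z : ℂ, f z = g z := by
  have hfa : AnalyticOnNhd ℂ f Set.univ :=
    hf.differentiableOn.analyticOnNhd isOpen_univ
  have hga : AnalyticOnNhd ℂ g Set.univ :=
    hg.differentiableOn.analyticOnNhd isOpen_univ
  have htend : Filter.Tendsto (fun n : ℕ => (((1 : ℝ) / (n + 1) : ℝ) : ℂ))
      Filter.atTop (nhdsWithin 0 {(0 : ℂ)}ᶜ) := by
    rw [tendsto_nhdsWithin_iff]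
    constructor
    · have : Filter.Tendsto (fun n : ℕ => ((1 : ℝ) / (n + 1))) Filter.atTop (nhds 0) :=
        tendsto_one_div_add_atTop_nhds_zero_nat
      have := (Complex.continuous_ofReal.tendsto (0 : ℝ)).comp this
      simpa [Function.comp_def] using this
    · filter_upwards with n
      simp only [Set.mem_compl_iff, Set.mem_singleton_iff]
      intro hc
      have : (1 : ℝ) / (n + 1) = 0 := by exact_mod_cast hc
      have : (0 : ℝ) < 1 / (n + 1) := by positivity
      simp_all
  have hfreq : ∃ᶠ z in nhdsWithin (0 : ℂ) {(0 : ℂ)}ᶜ, f z = g z :=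
    htend.frequently (Filter.Frequently.of_forall fun n => h _)
  intro z
  exact hfa.eqOn_of_preconnected_of_frequently_eq hga isPreconnected_univ
    (Set.mem_univ (0 : ℂ)) hfreq (Set.mem_univ z)

/-- Equivalence of the two formulations of the `α`-`β`-KMS condition for a linear functional
`φ` on an `α`-invariant *-subalgebra `A₀` of entire elements with `α_{-iβ/2}(A₀) = A₀`:
(1) `φ(a*a) = φ(α_{-iβ/2}(a) α_{-iβ/2}(a)*)` for all `a ∈ A₀` iff
(2) `φ(ab) = φ(b α_{iβ}(a))` for all `a, b ∈ A₀`.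
Here `αC z a` denotes the analytic extension `α_z(a)` of the orbit map of the entire
element `a`. -/
theorem stmt12 {A : Type*} [NonUnitalCStarAlgebra A] [PartialOrder A] [StarOrderedRing A]
    (α : ℝ → A ≃⋆ₐ[ℂ] A)
    (hgrp : ∀ s t : ℝ, ∀ a : A, α (s + t) a = α s (α t a))
    (h0 : ∀ a : A, α 0 a = a)
    (hcont : ∀ a : A, Continuous fun t : ℝ => α t a)
    (β : ℝ)
    (A₀ : NonUnitalStarSubalgebra ℂ A)
    (αC : ℂ → A → A)
    (hreal : ∀ (t : ℝ), ∀ a ∈ A₀, αC t a = α t a)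
    (hentire : ∀ a ∈ A₀, Differentiable ℂ fun z : ℂ => αC z a)
    (hmul : ∀ z : ℂ, ∀ a ∈ A₀, ∀ b ∈ A₀, αC z (a * b) = αC z a * αC z b)
    (haddC : ∀ z : ℂ, ∀ a ∈ A₀, ∀ b ∈ A₀, αC z (a + b) = αC z a + αC z b)
    (hstarC : ∀ z : ℂ, ∀ a ∈ A₀, αC z (star a) = star (αC (starRingEnd ℂ z) a))
    (hcomp : ∀ z w : ℂ, ∀ a ∈ A₀, αC z (αC w a) = αC (z + w) a)
    (hinv : ∀ t : ℝ, ∀ a ∈ A₀, αC t a ∈ A₀)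
    (hβinv : ∀ a ∈ A₀, αC (-(Complex.I * β) / 2) a ∈ A₀)
    (hβsurj : ∀ a ∈ A₀, ∃ b ∈ A₀, αC (-(Complex.I * β) / 2) b = a)
    (φ : A →ₗ[ℂ] ℂ)
    (hφinv : ∀ t : ℝ, ∀ a ∈ A₀, φ (αC t a) = φ a)
    (hφβ : ∀ a ∈ A₀, φ (αC (-(Complex.I * β) / 2) a) = φ a) :
    (∀ a ∈ A₀, φ (star a * a) =
        φ (αC (-(Complex.I * β) / 2) a * star (αC (-(Complex.I * β) / 2) a))) ↔
    (∀ a ∈ A₀, ∀ b ∈ A₀, φ (a * b) = φ (b * αC (Complex.I * β) a)) := by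
  set w : ℂ := -(Complex.I * β) / 2 with hw
  -- basic facts about `w`
  have hconjw : starRingEnd ℂ w = -w := by
    rw [hw]
    simp [map_div₀, Complex.conj_I, map_ofNat]
    ring
  have hconjnw : starRingEnd ℂ (-w) = w := by
    rw [map_neg, hconjw, neg_neg]
  -- `αC 0` is the identity on `A₀`
  have h0C : ∀ a ∈ A₀, αC 0 a = a := by
    intro a ha
    have := (hreal 0 a ha).trans (h0 a)
    simpa using this
  -- `αC z` is `ℂ`-homogeneous on `A₀` (by the identity theorem)
  have hsmul : ∀ z c : ℂ, ∀ a ∈ A₀, αC z (c • a) = c • αC z a := by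
    intro z c a ha
    have hmem : c • a ∈ A₀ := SMulMemClass.smul_mem c ha
    refine entire_eq_of_real_eq (hentire _ hmem) ((hentire a ha).const_smul c) ?_ z
    intro t
    rw [hreal t _ hmem]; simp only [Pi.smul_apply]; rw [hreal t a ha, map_smul]
  -- `αC (-w)` inverts `αC w` on `A₀`
  have hvw : ∀ b ∈ A₀, αC (-w) (αC w b) = b := by
    intro b hb
    rw [hcomp _ _ b hb, show -w + w = 0 by ring, h0C b hb]
  have hwv : ∀ b ∈ A₀, αC w (αC (-w) b) = b := by
    intro b hb
    obtain ⟨c, hc, hcb⟩ := hβsurj b hb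
    rw [← hcb, hvw c hc]
  have hvmem : ∀ a ∈ A₀, αC (-w) a ∈ A₀ := by
    intro a ha
    obtain ⟨b, hb, hba⟩ := hβsurj a ha
    rw [← hba, hvw b hb]; exact hb
  -- φ is invariant under `αC (-w)` as well
  have hφv : ∀ a ∈ A₀, φ (αC (-w) a) = φ a := by
    intro a ha
    have h1 := hφβ (αC (-w) a) (hvmem a ha)
    rw [hwv a ha] at h1
    exact h1.symm
  constructor
  · -- (1) → (2), by polarization
    intro h1
    -- additive polarization
    have hadd : ∀ a ∈ A₀, ∀ b ∈ A₀,
        (φ (star a * b) - φ (αC w b * star (αC w a))) +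
          (φ (star b * a) - φ (αC w a * star (αC w b))) = 0 := by
      intro a ha b hb
      have h := h1 (a + b) (add_mem ha hb)
      rw [haddC w a ha b hb] at h
      simp only [star_add, add_mul, mul_add, map_add] at h
      have ha' := h1 a ha
      have hb' := h1 b hb
      linear_combination h - ha' - hb'
    have key : ∀ a ∈ A₀, ∀ b ∈ A₀, φ (star a * b) = φ (αC w b * star (αC w a)) := by
      intro a ha b hb
      have e1 := hadd a ha b hb
      have e2 := hadd a ha (Complex.I • b) (SMulMemClass.smul_mem _ hb)
      rw [hsmul w Complex.I b hb] at e2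
      simp only [star_smul, smul_mul_assoc, mul_smul_comm, map_smul, smul_eq_mul,
        Complex.star_def, Complex.conj_I] at e2
      have e2' : φ (star a * b) - φ (αC w b * star (αC w a)) - φ (star b * a) +
          φ (αC w a * star (αC w b)) = 0 := by
        apply mul_left_cancel₀ Complex.I_ne_zero
        linear_combination e2
      linear_combination (1 / 2 : ℂ) * e1 + (1 / 2 : ℂ) * e2'
    intro a ha b hb
    have k := key (star a) (star_mem ha) b hb
    rw [star_star] at k
    have hsa : αC w (star a) = star (αC (-w) a) := by
      rw [hstarC w a ha, hconjw]
    rw [hsa, star_star] at k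
    have hm1 : αC w b ∈ A₀ := hβinv b hb
    have hm2 : αC (-w) a ∈ A₀ := hvmem a ha
    have hφp := hφv (αC w b * αC (-w) a) (mul_mem hm1 hm2)
    rw [hmul (-w) _ hm1 _ hm2, hvw b hb, hcomp (-w) (-w) a ha,
      show -w + -w = Complex.I * (β : ℂ) by rw [hw]; ring] at hφp
    rw [k, ← hφp]
  · -- (2) → (1)
    intro h2 a ha
    have hx : αC w a ∈ A₀ := hβinv a ha
    have hy : star (αC w a) ∈ A₀ := star_mem hx
    have k := h2 (αC w a) hx (star (αC w a)) hy
    rw [hcomp (Complex.I * β) w a ha,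
      show Complex.I * (β : ℂ) + w = -w by rw [hw]; ring] at k
    have hs : star (αC w a) = αC (-w) (star a) := by
      rw [hstarC (-w) a ha, hconjnw]
    have hrhs : star (αC w a) * αC (-w) a = αC (-w) (star a * a) := by
      rw [hmul (-w) (star a) (star_mem ha) a ha, ← hs]
    rw [hrhs, hφv (star a * a) (mul_mem (star_mem ha) ha)] at k
    exact k.symm
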